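/- arXiv:1208.6578 — 3 statements merged into one kernel-verified Lean document; each statement's English description precedes it below -/
import Mathlib

section
/- A continuous function f : I → ℝ on an interval I is non-monotone if and only if there exist points z' < z'' in I with f(z') = f(z'') such that f is not constant on the interval [z', z'']. -/
/-- Theorem EQ/NM: a continuous function on an interval `I` is non-monotone iff it
repeats a value at two points `z' < z''` without being constant on `[z', z'']`. -/
theorem stmt_3 (I : Set ℝ) (hI : I.OrdConnected) (f : ℝ → ℝ)
    (hcont : ContinuousOn f I) :
    (¬ MonotoneOn f I ∧ ¬ AntitoneOn f I) ↔
      ∃ z' z'', z' ∈ I ∧ z'' ∈ I ∧ z' < z'' ∧ f z' = f z'' ∧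
        ∃ z ∈ Set.Icc z' z'', f z ≠ f z' := by
  constructor
  · intro h
    rw [Set.not_monotoneOn_not_antitoneOn_iff_exists_lt_lt] at h
    obtain ⟨a, ha, b, hb, c, hc, hab, hbc, hcase⟩ := h
    have hIab : Set.Icc a b ⊆ I := fun x hx =>
      hI.out ha hb ⟨hx.1, hx.2⟩
    have hIbc : Set.Icc b c ⊆ I := fun x hx =>
      hI.out hb hc ⟨hx.1, hx.2⟩
    rcases hcase with ⟨h1, h2⟩ | ⟨h1, h2⟩
    · -- bump up: f a < f b, f c < f b; target M = max (f a) (f c)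
      set M := max (f a) (f c) with hM
      have hMb : M < f b := max_lt h1 h2
      have hu : M ∈ Set.Icc (f a) (f b) := ⟨le_max_left _ _, hMb.le⟩
      obtain ⟨u, hu1, hu2⟩ :=
        intermediate_value_Icc hab.le (hcont.mono hIab) hu
      have hv : M ∈ Set.Icc (f c) (f b) := ⟨le_max_right _ _, hMb.le⟩
      obtain ⟨v, hv1, hv2⟩ :=
        intermediate_value_Icc' hbc.le (hcont.mono hIbc) hv
      have hub : u < b := lt_of_le_of_ne hu1.2 (by rintro rfl; exact hMb.ne hu2.symm)
      have hbv : b < v := lt_of_le_of_ne hv1.1 (by rintro rfl; exact hMb.ne hv2.symm)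
      refine ⟨u, v, hIab hu1, hIbc hv1, hub.trans hbv, by rw [hu2, hv2],
        b, ⟨hub.le, hbv.le⟩, ?_⟩
      rw [hu2]; exact hMb.ne'
    · -- dent down: f b < f a, f b < f c; target M = min (f a) (f c)
      set M := min (f a) (f c) with hM
      have hMb : f b < M := lt_min h1 h2
      have hu : M ∈ Set.Icc (f b) (f a) := ⟨hMb.le, min_le_left _ _⟩
      obtain ⟨u, hu1, hu2⟩ :=
        intermediate_value_Icc' hab.le (hcont.mono hIab) hu
      have hv : M ∈ Set.Icc (f b) (f c) := ⟨hMb.le, min_le_right _ _⟩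
      obtain ⟨v, hv1, hv2⟩ :=
        intermediate_value_Icc hbc.le (hcont.mono hIbc) hv
      have hub : u < b := lt_of_le_of_ne hu1.2 (by rintro rfl; exact hMb.ne' hu2.symm)
      have hbv : b < v := lt_of_le_of_ne hv1.1 (by rintro rfl; exact hMb.ne' hv2.symm)
      refine ⟨u, v, hIab hu1, hIbc hv1, hub.trans hbv, by rw [hu2, hv2],
        b, ⟨hub.le, hbv.le⟩, ?_⟩
      rw [hu2]; exact hMb.ne
  · rintro ⟨z', z'', h1, h2, hlt, heq, z, hz, hne⟩
    have hzI : z ∈ I := hI.out h1 h2 ⟨hz.1, hz.2⟩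
    have hz1 : z' < z := lt_of_le_of_ne hz.1 (by rintro rfl; exact hne rfl)
    have hz2 : z < z'' := lt_of_le_of_ne hz.2 (by rintro rfl; exact hne heq.symm)
    rcases hne.lt_or_gt with h | h
    · -- f z < f z'
      constructor
      · intro hmono
        exact absurd (hmono h1 hzI hz1.le) (not_le.mpr h)
      · intro hanti
        rw [heq] at h
        exact absurd (hanti hzI h2 hz2.le) (not_le.mpr h)
    · constructor
      · intro hmono
        rw [heq] at h
        exact absurd (hmono hzI h2 hz2.le) (not_le.mpr h)
      · intro hanti
        exact absurd (hanti h1 hzI hz1.le) (not_le.mpr h)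
end

section
/- Let F(u) = 1 − exp(−e^u) be the standard extreme value CDF. For fixed y > 0, the function θ ↦ F(y + θ) − F(−y + θ) on ℝ attains its maximum at θ_M = −ln(sinh(y)/y), i.e., the derivative f(y + θ) − f(−y + θ) (with f(u) = e^u exp(−e^u)) vanishes at θ = θ_M, is positive for θ < θ_M, and negative for θ > θ_M. -/
/-- EVD composite: with `F(u) = 1 − exp(−eᵘ)` the extreme value CDF and density
`f(u) = eᵘ exp(−eᵘ)`, for fixed `y > 0` the derivative `f(y + θ) − f(−y + θ)` of
`θ ↦ F(y + θ) − F(−y + θ)` vanishes at `θ_M = −ln(sinh y / y)`, is positive for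
`θ < θ_M`, and negative for `θ > θ_M`. -/
theorem stmt_13 (y : ℝ) (hy : 0 < y)
    (f : ℝ → ℝ) (hf : ∀ u, f u = Real.exp u * Real.exp (-Real.exp u))
    (F : ℝ → ℝ) (hF : ∀ u, F u = 1 - Real.exp (-Real.exp u))
    (hF' : ∀ u, HasDerivAt F (f u) u)
    (θM : ℝ) (hθM : θM = -Real.log (Real.sinh y / y)) :
    (∀ θ, HasDerivAt (fun θ => F (y + θ) - F (-y + θ)) (f (y + θ) - f (-y + θ)) θ) ∧
    f (y + θM) - f (-y + θM) = 0 ∧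
    (∀ θ < θM, 0 < f (y + θ) - f (-y + θ)) ∧
    (∀ θ > θM, f (y + θ) - f (-y + θ) < 0) := by
  have hsinh : 0 < Real.sinh y := Real.sinh_pos_iff.mpr hy
  have hratio : 0 < Real.sinh y / y := div_pos hsinh hy
  -- exp θM = y / sinh y
  have hexpθM : Real.exp θM = y / Real.sinh y := by
    rw [hθM, Real.exp_neg, Real.exp_log hratio, inv_div]
  -- rewrite f as single exponential
  have hfe : ∀ u, f u = Real.exp (u - Real.exp u) := by
    intro u
    rw [hf u, ← Real.exp_add]
    ring_nf
  -- key comparison: sign of difference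
  have hdiffA : ∀ θ : ℝ, (y + θ - Real.exp (y + θ)) - (-y + θ - Real.exp (-y + θ))
      = 2 * y - 2 * Real.sinh y * Real.exp θ := by
    intro θ
    rw [Real.sinh_eq, Real.exp_add, Real.exp_add]
    ring
  refine ⟨?_, ?_, ?_, ?_⟩
  · intro θ
    have hA : HasDerivAt (fun θ : ℝ => F (y + θ)) (f (y + θ)) θ := by
      simpa [Function.comp_def] using (hF' (y + θ)).comp θ ((hasDerivAt_id θ).const_add y)
    have hB : HasDerivAt (fun θ : ℝ => F (-y + θ)) (f (-y + θ)) θ := by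
      simpa [Function.comp_def] using (hF' (-y + θ)).comp θ ((hasDerivAt_id θ).const_add (-y))
    exact hA.sub hB
  · rw [hfe, hfe, sub_eq_zero, Real.exp_eq_exp]
    have := hdiffA θM
    rw [hexpθM] at this
    have h2 : 2 * y - 2 * Real.sinh y * (y / Real.sinh y) = 0 := by
      field_simp
      ring
    linarith [this, h2]
  · intro θ hθ
    rw [hfe, hfe, sub_pos, Real.exp_lt_exp]
    have hlt : Real.exp θ < y / Real.sinh y := hexpθM ▸ Real.exp_lt_exp.mpr hθ
    have : 2 * Real.sinh y * Real.exp θ < 2 * Real.sinh y * (y / Real.sinh y) := by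
      apply mul_lt_mul_of_pos_left hlt (by linarith)
    have h2 : 2 * Real.sinh y * (y / Real.sinh y) = 2 * y := by field_simp
    nlinarith [hdiffA θ]
  · intro θ hθ
    rw [hfe, hfe, sub_neg, Real.exp_lt_exp]
    have hlt : y / Real.sinh y < Real.exp θ := hexpθM ▸ Real.exp_lt_exp.mpr hθ
    have : 2 * Real.sinh y * (y / Real.sinh y) < 2 * Real.sinh y * Real.exp θ := by
      apply mul_lt_mul_of_pos_left hlt (by linarith)
    have h2 : 2 * Real.sinh y * (y / Real.sinh y) = 2 * y := by field_simp
    nlinarith [hdiffA θ]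
end

section
/- Let F be a continuous CDF and suppose the translation family satisfies the coincidence property F(y + θ) − F(−y + θ) = F(y − θ) − F(−y − θ) for all y ≥ 0 and all θ ∈ ℝ (i.e., the composite RD of y = |x| depends only on |θ|). If F has a density f, then f is symmetric about 0: f(x) = f(−x) for all x. -/
/-- Composite-reducibility forces symmetry: if the differentiable CDF `F` (with
density `f`) satisfies `F(y + θ) − F(−y + θ) = F(y − θ) − F(−y − θ)` for all
`y ≥ 0` and all `θ`, then the density is symmetric: `f(x) = f(−x)`. -/
theorem stmt_16 (F f : ℝ → ℝ)
    (hF' : ∀ u, HasDerivAt F (f u) u)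
    (hcoinc : ∀ y ≥ (0 : ℝ), ∀ θ : ℝ,
      F (y + θ) - F (-y + θ) = F (y - θ) - F (-y - θ)) :
    ∀ x, f x = f (-x) := by
  -- First show the key fact for y ≥ 0.
  have key : ∀ y : ℝ, 0 ≤ y → f y = f (-y) := by
    intro y hy
    set h : ℝ → ℝ := fun θ =>
      F (y + θ) - F (-y + θ) - (F (y - θ) - F (-y - θ)) with hh
    have hzero : h = fun _ => (0 : ℝ) := by
      funext θ
      simp only [hh]
      have := hcoinc y hy θ
      linarith
    have d1 : HasDerivAt (fun θ : ℝ => F (y + θ)) (f (y + 0) * 1) 0 :=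
      (hF' (y + 0)).comp 0 ((hasDerivAt_id 0).const_add y)
    have d2 : HasDerivAt (fun θ : ℝ => F (-y + θ)) (f (-y + 0) * 1) 0 :=
      (hF' (-y + 0)).comp 0 ((hasDerivAt_id 0).const_add (-y))
    have d3 : HasDerivAt (fun θ : ℝ => F (y - θ)) (f (y - 0) * (-1)) 0 :=
      (hF' (y - 0)).comp 0 ((hasDerivAt_id 0).const_sub y)
    have d4 : HasDerivAt (fun θ : ℝ => F (-y - θ)) (f (-y - 0) * (-1)) 0 :=
      (hF' (-y - 0)).comp 0 ((hasDerivAt_id 0).const_sub (-y))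
    have dh : HasDerivAt h
        (f (y + 0) * 1 - f (-y + 0) * 1 - (f (y - 0) * (-1) - f (-y - 0) * (-1))) 0 :=
      (d1.sub d2).sub (d3.sub d4)
    have dz : HasDerivAt h (0 : ℝ) 0 := by
      rw [hzero]; exact hasDerivAt_const 0 0
    have := dh.unique dz
    simp only [add_zero, sub_zero, mul_one, mul_neg_one] at this
    linarith
  intro x
  rcases le_or_gt 0 x with hx | hx
  · exact key x hx
  · have := key (-x) (by linarith)
    simp at this
    linarith
end
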